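/- Let X be a quasiprojective scheme over a field k (i.e., a locally closed subscheme of some projective space ℙⁿ_k). Then every finite set of closed points of X admits a common affine open neighborhood. -/

import Mathlib

/-!
If `g : X ⟶ Proj 𝒜` is an immersion, `X` is closed in the open set `W = coborder (range g)`,
so `g ⁻¹ᵁ U` is affine for every affine open `U ⊆ W`. It therefore suffices to find a homogeneous
`f` of positive degree with `D₊(f) ⊆ W` containing the images of the given points. Such an `f`
lies in the homogeneous ideal `I(Wᶜ) ⊓ 𝒜₊` and outside the finitely many homogeneous primes
corresponding to the points, and it exists by graded prime avoidance: given `f` avoiding all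
primes but a minimal one `q`, and a homogeneous `g` lying in all of them but not in `q`,
the element `f ^ deg g + g ^ deg f` avoids all of them.
-/

open AlgebraicGeometry

attribute [local instance] MvPolynomial.gradedAlgebra

open HomogeneousIdeal

theorem AlgebraicGeometry.IsAffineOpen.preimage_of_isImmersion {X Y : Scheme} {U : Y.Opens}
    (hU : IsAffineOpen U) (f : X ⟶ Y) [IsImmersion f] (hUf : U ≤ f.coborderRange) :
    IsAffineOpen (f ⁻¹ᵁ U) := by
  have := (hU.preimage_of_isOpenImmersion f.coborderRange.ι (by simpa using hUf)).preimage
    f.liftCoborder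
  rwa [← Scheme.Hom.comp_preimage, f.liftCoborder_ι] at this

lemma Ideal.IsPrime.pow_add_pow_notMem {R : Type*} [CommRing R] {p : Ideal R} (hp : p.IsPrime)
    {f g : R} (hf : f ∈ p) (hg : g ∉ p) {m : ℕ} (hm : m ≠ 0) (n : ℕ) : f ^ m + g ^ n ∉ p :=
  fun h => hg (hp.mem_of_pow_mem n ((p.add_mem_iff_right (p.pow_mem_of_mem hf m hm.bot_lt)).mp h))

section Graded

variable {σ A : Type*} [CommRing A] [SetLike σ A] [AddSubgroupClass σ A] {𝒜 : ℕ → σ}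
  [GradedRing 𝒜]

lemma HomogeneousIdeal.exists_homogeneous_mem_notMem {I : HomogeneousIdeal 𝒜} {q : Ideal A}
    (h : ¬ I.toIdeal ≤ q) : ∃ d, ∃ a ∈ 𝒜 d, a ∈ I ∧ a ∉ q := by
  classical
  by_contra! hle
  obtain ⟨x, hxI, hxq⟩ := Set.not_subset.mp h
  rw [← DirectSum.sum_support_decompose 𝒜 x] at hxq
  exact hxq (Ideal.sum_mem q fun i _ => hle i _ (SetLike.coe_mem _) (I.isHomogeneous i hxI))

lemma HomogeneousIdeal.pos_of_mem_irrelevant {d : ℕ} {a : A} (ha : a ∈ 𝒜 d) (haI : a ∈ 𝒜₊)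
    (ha0 : a ≠ 0) : 0 < d := by
  refine Nat.pos_of_ne_zero fun hd => ha0 ?_
  subst hd
  rwa [mem_irrelevant_iff, GradedRing.proj_apply, DirectSum.decompose_of_mem_same 𝒜 ha] at haI

namespace ProjectiveSpectrum

lemma exists_homogeneous_mem_forall_mem_notMem {I : HomogeneousIdeal 𝒜}
    {q : ProjectiveSpectrum 𝒜} (hIq : ¬ I ≤ q.asHomogeneousIdeal)
    (S : Finset (ProjectiveSpectrum 𝒜)) (hSq : ∀ p ∈ S, ¬ p ≤ q) :
    ∃ d, ∃ g ∈ 𝒜 d, g ∈ I ∧ (∀ p ∈ S, g ∈ p.asHomogeneousIdeal) ∧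
      g ∉ q.asHomogeneousIdeal := by
  obtain ⟨d, a, ha, haI, haq⟩ := exists_homogeneous_mem_notMem hIq
  choose! e b hb hbp hbq using fun p (hp : p ∈ S) => exists_homogeneous_mem_notMem (hSq p hp)
  refine ⟨d + ∑ p ∈ S, e p, a * ∏ p ∈ S, b p,
    SetLike.mul_mem_graded ha (SetLike.prod_mem_graded 𝒜 e b hb), I.toIdeal.mul_mem_right _ haI,
    fun p hp => Ideal.mul_mem_left _ _ (Ideal.mem_of_dvd _ (S.dvd_prod_of_mem b hp) (hbp p hp)),
    ?_⟩
  have hq := q.isPrime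
  change a * _ ∉ q.asHomogeneousIdeal.toIdeal
  rw [hq.mul_mem_iff_mem_or_mem, Ideal.IsPrime.prod_mem_iff]
  rintro (h | ⟨p, hp, h⟩)
  exacts [haq h, hbq p hp h]

theorem exists_homogeneous_pos_mem_forall_notMem {I : HomogeneousIdeal 𝒜} (hI : I ≤ 𝒜₊)
    (S : Finset (ProjectiveSpectrum 𝒜)) (hS : ∀ x ∈ S, ¬ I ≤ x.asHomogeneousIdeal) :
    ∃ d, 0 < d ∧ ∃ f ∈ 𝒜 d, f ∈ I ∧ ∀ x ∈ S, f ∉ x.asHomogeneousIdeal := by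
  classical
  induction S using Finset.strongInduction with
  | _ S IH =>
  rcases S.eq_empty_or_nonempty with rfl | hS_ne
  · exact ⟨1, one_pos, 0, zero_mem _, zero_mem _, by simp⟩
  obtain ⟨q, hqS, hqmin⟩ := S.exists_minimal hS_ne
  obtain ⟨d, hd, f, hf, hfI, hfS⟩ :=
    IH (S.erase q) (S.erase_ssubset hqS) fun x hx => hS x (Finset.mem_of_mem_erase hx)
  by_cases hfq : f ∉ q.asHomogeneousIdeal
  · refine ⟨d, hd, f, hf, hfI, fun x hx => ?_⟩
    rcases eq_or_ne x q with rfl | hxq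
    exacts [hfq, hfS x (Finset.mem_erase_of_ne_of_mem hxq hx)]
  -- The minimality of `q` is what makes such a `g` exist.
  obtain ⟨e, g, hg, hgI, hgS, hgq⟩ := exists_homogeneous_mem_forall_mem_notMem (hS q hqS)
    (S.erase q) fun p hp hpq =>
      (Finset.mem_erase.mp hp).1 (le_antisymm hpq (hqmin (Finset.mem_of_mem_erase hp) hpq))
  have he : 0 < e := pos_of_mem_irrelevant hg (hI hgI) fun h => hgq (h ▸ zero_mem _)
  refine ⟨d * e, Nat.mul_pos hd he, f ^ e + g ^ d, ?_, ?_, fun x hx => ?_⟩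
  · refine add_mem ?_ ?_
    · simpa [mul_comm] using SetLike.pow_mem_graded e hf
    · simpa using SetLike.pow_mem_graded d hg
  · exact I.toIdeal.add_mem (I.toIdeal.pow_mem_of_mem hfI e he) (I.toIdeal.pow_mem_of_mem hgI d hd)
  · rcases eq_or_ne x q with rfl | hxq
    · exact x.isPrime.pow_add_pow_notMem (not_not.mp hfq) hgq he.ne' d
    · rw [add_comm]
      exact x.isPrime.pow_add_pow_notMem (hgS x (Finset.mem_erase_of_ne_of_mem hxq hx))
        (hfS x (Finset.mem_erase_of_ne_of_mem hxq hx)) hd.ne' e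

end ProjectiveSpectrum

theorem AlgebraicGeometry.Proj.exists_finset_subset_basicOpen_le (W : (Proj 𝒜).Opens)
    (S : Finset (Proj 𝒜)) (hS : ↑S ⊆ (W : Set (Proj 𝒜))) :
    ∃ d, 0 < d ∧ ∃ f ∈ 𝒜 d, ↑S ⊆ (basicOpen 𝒜 f : Set (Proj 𝒜)) ∧ basicOpen 𝒜 f ≤ W := by
  set Z : Set (ProjectiveSpectrum 𝒜) := (W : Set (Proj 𝒜))ᶜ
  have hS_Z : ∀ x ∈ S, ¬ ProjectiveSpectrum.vanishingIdeal Z ⊓ 𝒜₊ ≤ x.asHomogeneousIdeal := by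
    intro x hx hle
    rw [← toIdeal_le_toIdeal_iff, toIdeal_inf, x.isPrime.inf_le, toIdeal_le_toIdeal_iff] at hle
    rcases hle with hZ | hirr
    · have : x ∈ closure Z := ProjectiveSpectrum.zeroLocus_vanishingIdeal_eq_closure 𝒜 Z ▸ hZ
      exact (W.isOpen.isClosed_compl.closure_eq ▸ this) (hS hx)
    · exact x.not_irrelevant_le hirr
  obtain ⟨d, hd, f, hf, hfI, hfS⟩ :=
    ProjectiveSpectrum.exists_homogeneous_pos_mem_forall_notMem inf_le_right S hS_Z
  refine ⟨d, hd, f, hf, hfS, fun y hy => ?_⟩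
  by_contra hyW
  have hfZ : f ∈ ProjectiveSpectrum.vanishingIdeal Z := SetLike.le_def.mp inf_le_left hfI
  exact hy ((ProjectiveSpectrum.mem_vanishingIdeal Z f).mp hfZ y hyW)

end Graded

theorem quasiprojective_finite_set_has_affine_neighborhood_general
    (k : Type) [Field k] (X : Scheme) (n : ℕ)
    (g : X ⟶ Proj (MvPolynomial.homogeneousSubmodule (Fin (n + 1)) k))
    [IsImmersion g]
    (s : Finset X) :
    ∃ U : X.Opens, IsAffineOpen U ∧ (s : Set X) ⊆ (U : Set X) := by
  classical
  obtain ⟨d, hd, f, hf, hsf, hfW⟩ :=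
    Proj.exists_finset_subset_basicOpen_le g.coborderRange (s.image g.base) <| by
      rw [Finset.coe_image]
      exact (Set.image_subset_range _ _).trans subset_coborder
  exact ⟨g ⁻¹ᵁ Proj.basicOpen _ f,
    (Proj.isAffineOpen_basicOpen _ f hf hd).preimage_of_isImmersion g hfW,
    fun x hx => hsf (Finset.mem_image_of_mem g.base hx)⟩

/-- Let `X` be a quasiprojective scheme over a field `k`, i.e. `X`
admits an immersion (locally closed embedding) into some projective space
`ℙⁿ_k = Proj k[X₀, …, Xₙ]`.  Then every finite set of closed points of `X` admits
a common affine open neighborhood. -/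
theorem quasiprojective_finite_set_has_affine_neighborhood
    (k : Type) [Field k] (X : Scheme) (n : ℕ)
    (g : X ⟶ Proj (MvPolynomial.homogeneousSubmodule (Fin (n + 1)) k))
    [IsImmersion g]
    (s : Finset X) (hs : ∀ x ∈ s, IsClosed ({x} : Set X)) :
    ∃ U : X.Opens, IsAffineOpen U ∧ (s : Set X) ⊆ (U : Set X) :=
  quasiprojective_finite_set_has_affine_neighborhood_general k X n g s
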